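/- For λ ≥ 2 and m = k−j−1 even with m > 2, the internal nodes of a 2-path L(j,k) can be influenced within λ rounds at total internal cost k−j−2 via the incentive pattern 01(20)*, provided both endpoints j and k are influenced sufficiently early (endpoint j by round λ−1 and k by round λ−1). -/

import Mathlib

open Finset

/-- Path adjacency on ℕ: `u` and `v` are consecutive. -/
def pAdj (u v : ℕ) : Prop := u + 1 = v ∨ v + 1 = u

instance : DecidableRel pAdj := fun u v => by unfold pAdj; infer_instance

/-- Influence process on the node set `S` of a path, thresholds `t`, incentives `p`:
at round 0 exactly the nodes with `p v = t v` are influenced; afterwards a node is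
influenced once the number of already influenced neighbours reaches `t v - p v`. -/
def infl (S : Finset ℕ) (t p : ℕ → ℕ) : ℕ → Finset ℕ
  | 0 => S.filter fun v => p v = t v
  | ℓ + 1 => infl S t p ℓ ∪ S.filter fun v =>
      t v - p v ≤ ((infl S t p ℓ).filter fun u => pAdj u v).card

/-!
Nodes at odd offset `3, 5, …` from `j` have incentive `2 = t`, so they are influenced at
round 0. Each remaining internal node lacks at most as many influences as it has neighbours
among these and the endpoints: `j + 2` and the inner even nodes are influenced at round 1, and
the extreme nodes `j + 1`, `k - 1` as soon as `j`, resp. `k`, are, i.e. by round `λ` since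
`λ - 1 ≥ 1`. The cost is `1 + 2 · (m - 2) / 2 = k - j - 2`.
-/

section Influence

variable {S : Finset ℕ} {t p : ℕ → ℕ}

lemma infl_mono : Monotone (infl S t p) :=
  monotone_nat_of_le_succ fun ℓ => by
    rw [infl]
    exact subset_union_left

lemma mem_infl_zero {v : ℕ} (hv : v ∈ S) (h : p v = t v) : v ∈ infl S t p 0 := by
  rw [infl]
  exact mem_filter.2 ⟨hv, h⟩

lemma mem_infl_succ {ℓ v : ℕ} (hv : v ∈ S)
    (h : t v - p v ≤ #{u ∈ infl S t p ℓ | pAdj u v}) : v ∈ infl S t p (ℓ + 1) := by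
  rw [infl]
  exact mem_union_right _ (mem_filter.2 ⟨hv, h⟩)

lemma mem_infl_succ_of_adj {ℓ u v : ℕ} (hv : v ∈ S) (h : t v ≤ p v + 1)
    (hu : u ∈ infl S t p ℓ) (huv : pAdj u v) : v ∈ infl S t p (ℓ + 1) := by
  refine mem_infl_succ hv (le_trans (by omega) (card_pos.2 ⟨u, ?_⟩))
  exact mem_filter.2 ⟨hu, huv⟩

lemma mem_infl_succ_of_neighbors {ℓ v : ℕ} (hv : v + 1 ∈ S) (h : t (v + 1) ≤ p (v + 1) + 2)
    (hl : v ∈ infl S t p ℓ) (hr : v + 2 ∈ infl S t p ℓ) : v + 1 ∈ infl S t p (ℓ + 1) := by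
  have hpair : {v, v + 2} ⊆ {u ∈ infl S t p ℓ | pAdj u (v + 1)} := by
    intro u hu
    rcases mem_insert.1 hu with rfl | hu
    · exact mem_filter.2 ⟨hl, Or.inl rfl⟩
    · rw [mem_singleton.1 hu]
      exact mem_filter.2 ⟨hr, Or.inr rfl⟩
  refine mem_infl_succ hv ?_
  calc t (v + 1) - p (v + 1) ≤ 2 := by omega
    _ = #{v, v + 2} := (card_pair (by omega)).symm
    _ ≤ _ := card_le_card hpair

end Influence

/-- The incentive pattern `01(20)*`, indexed by the offset `d ≥ 1` from the left endpoint. -/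
def evenPattern (d : ℕ) : ℕ :=
  if d = 1 then 0 else if d = 2 then 1 else if d % 2 = 1 then 2 else 0

lemma evenPattern_of_odd {d : ℕ} (hd : 3 ≤ d) (hodd : d % 2 = 1) : evenPattern d = 2 := by
  unfold evenPattern
  split_ifs <;> omega

lemma evenPattern_of_even {d : ℕ} (hd : 4 ≤ d) (heven : d % 2 = 0) : evenPattern d = 0 := by
  unfold evenPattern
  split_ifs <;> omega

lemma sum_range_evenPattern (c : ℕ) :
    ∑ d ∈ range (2 * c + 4), evenPattern (d + 1) = 2 * c + 3 := by
  induction c with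
  | zero => simp [evenPattern, sum_range_succ]
  | succ c ih =>
    rw [show 2 * (c + 1) + 4 = 2 * c + 4 + 1 + 1 by ring, sum_range_succ, sum_range_succ, ih,
      evenPattern_of_odd (by omega) (by omega), evenPattern_of_even (by omega) (by omega)]
    ring

def TwoPathPattern (S : Finset ℕ) (t p : ℕ → ℕ) (j k : ℕ) : Prop :=
  ∀ d, 0 < d → j + d < k → j + d ∈ S ∧ t (j + d) = 2 ∧ p (j + d) = evenPattern d

namespace TwoPathPattern

variable {S : Finset ℕ} {t p : ℕ → ℕ} {j k ℓ c : ℕ}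

lemma mem_infl_zero_of_odd (h : TwoPathPattern S t p j k) {d : ℕ} (hd : 3 ≤ d)
    (hdk : j + d < k) (hodd : d % 2 = 1) : j + d ∈ infl S t p 0 := by
  obtain ⟨hS, ht, hp⟩ := h d (by omega) hdk
  exact _root_.mem_infl_zero hS (by rw [hp, ht, evenPattern_of_odd hd hodd])

lemma mem_infl_one (h : TwoPathPattern S t p j k) {d : ℕ} (hd : 2 ≤ d) (hdk : j + d + 1 < k) :
    j + d ∈ infl S t p 1 := by
  obtain ⟨hS, ht, hp⟩ := h d (by omega) (by omega)
  rcases Nat.even_or_odd' d with ⟨e, rfl | rfl⟩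
  · have hr := h.mem_infl_zero_of_odd (d := 2 * e + 1) (by omega) hdk (by omega)
    rcases (by omega : e = 1 ∨ 2 ≤ e) with rfl | he
    · exact mem_infl_succ_of_adj hS (by rw [hp, ht]; rfl) hr (Or.inr rfl)
    · have hl := h.mem_infl_zero_of_odd (d := 2 * e - 1) (by omega) (by omega) (by omega)
      have hv : j + 2 * e = j + (2 * e - 1) + 1 := by omega
      rw [hv] at hS ht ⊢
      refine mem_infl_succ_of_neighbors hS (by omega) hl ?_
      rwa [show j + (2 * e - 1) + 2 = j + (2 * e + 1) by omega]
  · exact infl_mono zero_le_one (h.mem_infl_zero_of_odd (by omega) (by omega) (by omega))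

lemma left_mem_infl (h : TwoPathPattern S t p j k) (hk : j + 3 < k) (hℓ : 1 ≤ ℓ)
    (hj : j ∈ infl S t p ℓ) : j + 1 ∈ infl S t p (ℓ + 1) := by
  obtain ⟨hS, ht, -⟩ := h 1 one_pos (by omega)
  exact mem_infl_succ_of_neighbors hS (by omega) hj
    (infl_mono hℓ (h.mem_infl_one le_rfl (by omega)))

lemma right_mem_infl (h : TwoPathPattern S t p j (j + 2 * c + 5))
    (hk : j + 2 * c + 5 ∈ infl S t p ℓ) : j + 2 * c + 4 ∈ infl S t p (ℓ + 1) := by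
  obtain ⟨hS, ht, -⟩ := h (2 * c + 4) (by omega) (by omega)
  have hl := h.mem_infl_zero_of_odd (d := 2 * c + 3) (by omega) (by omega) (by omega)
  refine mem_infl_succ_of_neighbors hS ?_ (infl_mono (Nat.zero_le ℓ) hl) hk
  show t (j + (2 * c + 4)) ≤ p (j + (2 * c + 4)) + 2
  omega

lemma mem_infl (h : TwoPathPattern S t p j (j + 2 * c + 5)) (hℓ : 1 ≤ ℓ)
    (hj : j ∈ infl S t p ℓ) (hk : j + 2 * c + 5 ∈ infl S t p ℓ) :
    ∀ i ∈ Ioo j (j + 2 * c + 5), i ∈ infl S t p (ℓ + 1) := by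
  intro i hi
  rw [mem_Ioo] at hi
  obtain ⟨d, rfl⟩ : ∃ d, i = j + d := ⟨i - j, by omega⟩
  rcases (by omega : d = 1 ∨ d = 2 * c + 4 ∨ (2 ≤ d ∧ j + d + 1 < j + 2 * c + 5)) with
    rfl | rfl | ⟨hd, hdk⟩
  · exact h.left_mem_infl (by omega) hℓ hj
  · exact h.right_mem_infl hk
  · exact infl_mono (by omega) (h.mem_infl_one hd hdk)

lemma sum_eq (h : TwoPathPattern S t p j (j + 2 * c + 5)) :
    ∑ i ∈ Ioo j (j + 2 * c + 5), p i = 2 * c + 3 := by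
  rw [← Ico_add_one_left_eq_Ioo, sum_Ico_eq_sum_range,
    show j + 2 * c + 5 - (j + 1) = 2 * c + 4 by omega, ← sum_range_evenPattern c]
  refine sum_congr rfl fun d hd => ?_
  rw [mem_range] at hd
  rw [show j + 1 + d = j + (d + 1) by ring]
  exact (h (d + 1) (by omega) (by omega)).2.2

end TwoPathPattern

theorem two_path_even_pattern_general (n lam j k : ℕ) (t p : ℕ → ℕ)
    (hlam : 2 ≤ lam) (hkn : k < n)
    (htint : ∀ i, j < i → i < k → t i = 2)
    (heven : Even (k - j - 1)) (hm : 2 < k - j - 1)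
    (hpat : ∀ i, j < i → i < k →
      p i = if i = j + 1 then 0 else if i = j + 2 then 1
            else if (i - j) % 2 = 1 then 2 else 0)
    (hj : j ∈ infl (range n) t p (lam - 1))
    (hk : k ∈ infl (range n) t p (lam - 1)) :
    (∀ i ∈ Ioo j k, i ∈ infl (range n) t p lam) ∧
    ∑ i ∈ Ioo j k, p i = k - j - 2 := by
  obtain ⟨c, rfl⟩ : ∃ c, k = j + 2 * c + 5 := by
    obtain ⟨e, he⟩ := heven
    exact ⟨e - 2, by omega⟩
  obtain ⟨ℓ, rfl⟩ : ∃ ℓ, lam = ℓ + 1 := ⟨lam - 1, by omega⟩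
  rw [Nat.add_sub_cancel] at hj hk
  have h : TwoPathPattern (range n) t p j (j + 2 * c + 5) := fun d hd hdk =>
    ⟨mem_range.2 (by omega), htint _ (by omega) hdk, by
      rw [hpat _ (by omega) hdk, evenPattern, Nat.add_sub_cancel_left]
      simp only [Nat.add_left_cancel_iff]⟩
  exact ⟨h.mem_infl (by omega) hj hk, by rw [h.sum_eq]; omega⟩

/-- for `lam ≥ 2` and `m = k-j-1` even with `m > 2`, the incentive
pattern `01(20)*` on the internal nodes of a 2-path `L(j,k)` has internal cost
`k-j-2` and influences all internal nodes within `lam` rounds, provided both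
endpoints `j` and `k` are influenced by round `lam - 1`. -/
theorem two_path_even_pattern (n lam j k : ℕ) (t p : ℕ → ℕ)
    (hlam : 2 ≤ lam) (hkn : k < n)
    (htj : t j = 1) (htk : t k = 1) (htint : ∀ i, j < i → i < k → t i = 2)
    (heven : Even (k - j - 1)) (hm : 2 < k - j - 1)
    (hpat : ∀ i, j < i → i < k →
      p i = if i = j + 1 then 0 else if i = j + 2 then 1
            else if (i - j) % 2 = 1 then 2 else 0)
    (hj : j ∈ infl (range n) t p (lam - 1))
    (hk : k ∈ infl (range n) t p (lam - 1)) :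
    (∀ i ∈ Ioo j k, i ∈ infl (range n) t p lam) ∧
    ∑ i ∈ Ioo j k, p i = k - j - 2 :=
  two_path_even_pattern_general n lam j k t p hlam hkn htint heven hm hpat hj hk
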